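/- arXiv:1011.1528 — 2 statements merged into one kernel-verified Lean document; each statement's English description precedes it below -/
import Mathlib

section
/- Let K be a commutative ring with unity and A a finite alphabet. For all polynomials P, Q ∈ K⟨A⟩ and every Lie polynomial R ∈ L_K(A), the right and left residuals by R are derivations of the shuffle algebra: (P ⧢ Q) ▷ R = (P ▷ R) ⧢ Q + P ⧢ (Q ▷ R), and R ◁ (P ⧢ Q) = (R ◁ P) ⧢ Q + P ⧢ (R ◁ Q). -/
open scoped BigOperators
open Classical

attribute [local instance 100] LieRing.ofAssociativeRing

noncomputable section

/-- The free associative algebra `K⟨A⟩` on the alphabet `A`, realized as the monoid algebra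
of the free monoid on `A`. -/
abbrev NC (K A : Type*) [CommRing K] : Type _ := MonoidAlgebra K (FreeMonoid A)

variable (K A : Type*) [CommRing K]

/-- The monomial (word) `w` viewed as an element of `K⟨A⟩`. -/
def wp (w : List A) : NC K A := MonoidAlgebra.single (FreeMonoid.ofList w) 1

/-- The coefficient `(P, w)` of the word `w` in the polynomial `P`. -/
def coeffW (P : NC K A) (w : List A) : K := P.coeff (FreeMonoid.ofList w)

/-- The canonical scalar product `(P, Q) = ∑_w (P, w)(Q, w)` on `K⟨A⟩`. -/
def sp (P Q : NC K A) : K := Finsupp.sum P.coeff fun w c => c * Q.coeff w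

/-- The free Lie algebra `L_K(A)`: the Lie subalgebra of `K⟨A⟩` (with the commutator
bracket) generated by the letters. -/
def freeLie : LieSubalgebra K (NC K A) :=
  LieSubalgebra.lieSpan K (NC K A) (Set.range fun a : A => wp K A [a])

/-- The adjoint `λ` of the left-normed Lie bracketing, on words:
`λ(ε) = 0`, `λ(a) = a`, `λ(aub) = λ(au)b − λ(ub)a`. -/
def lam : List A → NC K A
  | [] => 0
  | [a] => wp K A [a]
  | a :: b :: t =>
      lam (a :: (b :: t).dropLast) * wp K A [(b :: t).getLast (by simp)] -
        lam (b :: t) * wp K A [a]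
  termination_by w => w.length
  decreasing_by
    all_goals simp [List.length_dropLast]

/-- `λ` extended linearly to the whole of `K⟨A⟩`. -/
def lamLin : NC K A →ₗ[K] NC K A :=
  (Finsupp.linearCombination K fun w : FreeMonoid A => lam K A (FreeMonoid.toList w)).comp
    (MonoidAlgebra.coeffLinearEquiv K).toLinearMap

/-- The shuffle product of two words, as an element of `K⟨A⟩`. -/
def shuffleW : List A → List A → NC K A
  | [], v => wp K A v
  | u, [] => wp K A u
  | a :: u, b :: v =>
      wp K A [a] * shuffleW u (b :: v) + wp K A [b] * shuffleW (a :: u) v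
  termination_by u v => u.length + v.length
  decreasing_by
    all_goals simp [Nat.lt_succ_iff]

/-- The shuffle product on `K⟨A⟩`, extended bilinearly. -/
def sh (P Q : NC K A) : NC K A :=
  Finsupp.sum P.coeff fun u cu =>
    Finsupp.sum Q.coeff fun v cv =>
      (cu * cv) • shuffleW K A (FreeMonoid.toList u) (FreeMonoid.toList v)

/-- The right residual `P ▷ q` of `P` by a word `q`: `(P ▷ q, w) = (P, qw)`. -/
def rresW (P : NC K A) (q : List A) : NC K A :=
  Finsupp.sum P.coeff fun u c =>
    if q <+: FreeMonoid.toList u then c • wp K A ((FreeMonoid.toList u).drop q.length) else 0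

/-- The right residual `P ▷ Q`: `(P ▷ Q, w) = (P, Qw)`. -/
def rres (P Q : NC K A) : NC K A :=
  Finsupp.sum Q.coeff fun v c => c • rresW K A P (FreeMonoid.toList v)

/-- Auxiliary left residual by a word `q`: `(q ◁ P, w) = (P, wq)`. -/
def lresW (P : NC K A) (q : List A) : NC K A :=
  Finsupp.sum P.coeff fun u c =>
    if q <:+ FreeMonoid.toList u then
      c • wp K A ((FreeMonoid.toList u).take ((FreeMonoid.toList u).length - q.length))
    else 0

/-- The left residual `Q ◁ P`: `(Q ◁ P, w) = (P, wQ)`. -/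
def lres (Q P : NC K A) : NC K A :=
  Finsupp.sum Q.coeff fun v c => c • lresW K A P (FreeMonoid.toList v)

/-- The number of trailing occurrences of the letter `a` in the word `v`. -/
def trailCount (a : A) (v : FreeMonoid A) : ℕ :=
  ((FreeMonoid.toList v).reverse.takeWhile fun x => decide (x = a)).length

/-- `d(P)`: the least number of trailing `a`'s among the words in the support of `P`. -/
def dP (a : A) (P : NC K A) : ℕ :=
  sInf {n : ℕ | ∃ v ∈ Finsupp.support P.coeff, trailCount A a v = n}

/-- `e(P)`: the largest number of trailing `a`'s among the words in the support of `P`. -/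
def eP (a : A) (P : NC K A) : ℕ :=
  Finset.sup (Finsupp.support P.coeff) (trailCount A a)

/-- The polynomial `P_i` in the decomposition `P = ∑ P_i b a^i`: it collects (and strips
the suffix `b a^i` from) the monomials of `P` with exactly `i` trailing `a`'s. -/
def partBA (a b : A) (i : ℕ) (P : NC K A) : NC K A :=
  Finsupp.sum P.coeff fun v c =>
    if (FreeMonoid.toList v).reverse.take (i + 1) = List.replicate i a ++ [b] then
      c • wp K A ((FreeMonoid.toList v).take ((FreeMonoid.toList v).length - (i + 1)))
    else 0

/-- A word is Lyndon if it is nonempty and strictly smaller, in the lexicographic order,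
than each of its proper nonempty right factors. -/
def IsLyndon {A : Type*} [LinearOrder A] (w : List A) : Prop :=
  w ≠ [] ∧ ∀ s t : List A, w = t ++ s → t ≠ [] → s ≠ [] → List.Lex (· < ·) w s

/-- `γ(w)`: the nonnegative generator of the ideal `{(P, w) : P ∈ L_ℤ(A)}` of `ℤ`. -/
def gammaW (A : Type*) (w : List A) : ℤ :=
  haveI : (Ideal.span {c : ℤ | ∃ P ∈ freeLie ℤ A, coeffW ℤ A P w = c}).IsPrincipal :=
    IsPrincipalIdealRing.principal _
  (Submodule.IsPrincipal.generator
    (Ideal.span {c : ℤ | ∃ P ∈ freeLie ℤ A, coeffW ℤ A P w = c})).natAbs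

end

/-! Residuation by a letter is a derivation of the shuffle product: the first (last) letter of a
word of `u ⧢ v` is the first (last) letter of `u` or of `v`. Residuation by a word is the
composite of the residuations by its letters, so `R ↦ (· ▷ R)` is an anti-homomorphism and
`R ↦ (R ◁ ·)` a homomorphism into the endomorphisms of `K⟨A⟩`; both send commutators to
commutators. Since the derivations of any bilinear product form a Lie subalgebra of the
endomorphisms, every element of the Lie algebra generated by the letters acts by derivations. -/

section Derivations

variable {R M : Type*} [CommRing R] [AddCommGroup M] [Module R M]

def derivationLieSubalgebra (μ : M →ₗ[R] M →ₗ[R] M) :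
    LieSubalgebra R (Module.End R M) where
  carrier := {D | ∀ x y, D (μ x y) = μ (D x) y + μ x (D y)}
  add_mem' {D E} hD hE x y := by
    simp only [LinearMap.add_apply, hD x y, hE x y, map_add]
    abel
  zero_mem' x y := by simp
  smul_mem' c D hD x y := by simp [hD x y]
  lie_mem' {D E} hD hE x y := by
    rw [Set.mem_ofPred_eq] at hD hE
    simp only [LieRing.of_associative_ring_bracket, LinearMap.sub_apply, Module.End.mul_apply,
      hD, hE, map_add, map_sub]
    abel

theorem mem_derivationLieSubalgebra {μ : M →ₗ[R] M →ₗ[R] M} {D : Module.End R M} :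
    D ∈ derivationLieSubalgebra μ ↔ ∀ x y, D (μ x y) = μ (D x) y + μ x (D y) :=
  Iff.rfl

end Derivations

noncomputable section

variable {K A : Type*} [CommRing K]

abbrev wordBasis (K A : Type*) [CommRing K] : Module.Basis (FreeMonoid A) K (NC K A) :=
  MonoidAlgebra.basis (FreeMonoid A) K

theorem wordBasis_apply (w : FreeMonoid A) : wordBasis K A w = wp K A w.toList := by
  rw [MonoidAlgebra.basis_apply, wp, FreeMonoid.ofList_toList]

theorem wp_eq_wordBasis (w : List A) : wp K A w = wordBasis K A (FreeMonoid.ofList w) := by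
  rw [wordBasis_apply, FreeMonoid.toList_ofList]

theorem wordBasis_constr_apply {M : Type*} [AddCommGroup M] [Module K M]
    (f : FreeMonoid A → M) (P : NC K A) :
    (wordBasis K A).constr K f P = P.coeff.sum fun w c => c • f w :=
  Module.Basis.constr_apply _ _ _ _

theorem wp_mul_wp (u v : List A) : wp K A u * wp K A v = wp K A (u ++ v) := by
  rw [wp, wp, wp, MonoidAlgebra.single_mul_single, one_mul]
  rfl

theorem wp_cons (x : A) (u : List A) : wp K A (x :: u) = wp K A [x] * wp K A u := by
  rw [wp_mul_wp, List.singleton_append]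

section Ext

variable {M : Type*} [AddCommGroup M] [Module K M]

theorem lhom_ext_wp {f g : NC K A →ₗ[K] M} (h : ∀ u, f (wp K A u) = g (wp K A u)) : f = g :=
  (wordBasis K A).ext fun w => by simpa only [wordBasis_apply] using h w.toList

theorem lhom_ext_wp₂ {f g : NC K A →ₗ[K] NC K A →ₗ[K] M}
    (h : ∀ u v, f (wp K A u) (wp K A v) = g (wp K A u) (wp K A v)) : f = g :=
  lhom_ext_wp fun u => lhom_ext_wp fun v => h u v

end Ext

theorem mem_derivationLieSubalgebra_of_wp {μ : NC K A →ₗ[K] NC K A →ₗ[K] NC K A}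
    {D : Module.End K (NC K A)}
    (h : ∀ u v, D (μ (wp K A u) (wp K A v)) =
      μ (D (wp K A u)) (wp K A v) + μ (wp K A u) (D (wp K A v))) :
    D ∈ derivationLieSubalgebra μ := by
  have := lhom_ext_wp₂ (f := μ.compr₂ D) (g := μ ∘ₗ D + μ.compl₂ D) (by simpa using h)
  exact mem_derivationLieSubalgebra.2 fun x y => by simpa using LinearMap.congr_fun₂ this x y

def rresWordLin (q : List A) : Module.End K (NC K A) :=
  (wordBasis K A).constr K fun u =>
    if q <+: u.toList then wp K A (u.toList.drop q.length) else 0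

def lresWordLin (q : List A) : Module.End K (NC K A) :=
  (wordBasis K A).constr K fun u =>
    if q <:+ u.toList then wp K A (u.toList.take (u.toList.length - q.length)) else 0

def rresLin : NC K A →ₗ[K] Module.End K (NC K A) :=
  (wordBasis K A).constr K fun v => rresWordLin v.toList

def lresLin : NC K A →ₗ[K] Module.End K (NC K A) :=
  (wordBasis K A).constr K fun v => lresWordLin v.toList

def shuffleLin : NC K A →ₗ[K] NC K A →ₗ[K] NC K A :=
  (wordBasis K A).constr K fun u => (wordBasis K A).constr K fun v =>
    shuffleW K A u.toList v.toList

theorem sh_eq_shuffleLin (P Q : NC K A) : sh K A P Q = shuffleLin P Q := by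
  rw [sh, shuffleLin, wordBasis_constr_apply, LinearMap.finsupp_sum_apply]
  refine Finsupp.sum_congr fun u _ => ?_
  rw [LinearMap.smul_apply, wordBasis_constr_apply, Finsupp.smul_sum]
  simp only [smul_smul]

theorem rres_eq_rresLin (P R : NC K A) : rres K A P R = rresLin R P := by
  rw [rres, rresLin, wordBasis_constr_apply, LinearMap.finsupp_sum_apply]
  refine Finsupp.sum_congr fun v _ => ?_
  rw [LinearMap.smul_apply, rresW, rresWordLin, wordBasis_constr_apply]
  simp only [smul_ite, smul_zero]

theorem lres_eq_lresLin (R P : NC K A) : lres K A R P = lresLin R P := by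
  rw [lres, lresLin, wordBasis_constr_apply, LinearMap.finsupp_sum_apply]
  refine Finsupp.sum_congr fun v _ => ?_
  rw [LinearMap.smul_apply, lresW, lresWordLin, wordBasis_constr_apply]
  simp only [smul_ite, smul_zero]

theorem rresWordLin_wp (q w : List A) :
    rresWordLin q (wp K A w) = if q <+: w then wp K A (w.drop q.length) else 0 := by
  rw [rresWordLin, wp_eq_wordBasis, Module.Basis.constr_basis, FreeMonoid.toList_ofList]

theorem lresWordLin_wp (q w : List A) :
    lresWordLin q (wp K A w) = if q <:+ w then wp K A (w.take (w.length - q.length)) else 0 := by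
  rw [lresWordLin, wp_eq_wordBasis, Module.Basis.constr_basis, FreeMonoid.toList_ofList]

theorem rresWordLin_append (u v : List A) :
    rresWordLin (K := K) (u ++ v) = rresWordLin v * rresWordLin u := by
  refine lhom_ext_wp fun w => ?_
  rw [Module.End.mul_apply, rresWordLin_wp, rresWordLin_wp]
  by_cases hu : u <+: w
  · obtain ⟨s, rfl⟩ := hu
    rw [if_pos (List.prefix_append u s), List.drop_left, rresWordLin_wp]
    simp only [List.prefix_append_right_inj, List.length_append, List.drop_length_add_append]
  · rw [if_neg fun h => hu ((List.prefix_append u v).trans h), if_neg hu, map_zero]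

theorem lresWordLin_append (u v : List A) :
    lresWordLin (K := K) (u ++ v) = lresWordLin u * lresWordLin v := by
  refine lhom_ext_wp fun w => ?_
  rw [Module.End.mul_apply, lresWordLin_wp, lresWordLin_wp]
  by_cases hv : v <:+ w
  · obtain ⟨s, rfl⟩ := hv
    rw [if_pos (List.suffix_append s v), List.length_append, Nat.add_sub_cancel,
      List.take_left, lresWordLin_wp]
    simp only [List.suffix_append_self_iff, List.length_append, Nat.add_sub_add_right,
      List.take_append_of_le_length (Nat.sub_le _ _)]
  · rw [if_neg fun h => hv ((List.suffix_append u v).trans h), if_neg hv, map_zero]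

theorem rresLin_wp (v : List A) : rresLin (wp K A v) = rresWordLin v := by
  rw [rresLin, wp_eq_wordBasis, Module.Basis.constr_basis, FreeMonoid.toList_ofList]

theorem lresLin_wp (v : List A) : lresLin (wp K A v) = lresWordLin v := by
  rw [lresLin, wp_eq_wordBasis, Module.Basis.constr_basis, FreeMonoid.toList_ofList]

theorem rresLin_mul (R S : NC K A) : rresLin (R * S) = rresLin S * rresLin R := by
  have := lhom_ext_wp₂ (f := (LinearMap.mul K (NC K A)).compr₂ rresLin)
    (g := (LinearMap.mul K (Module.End K (NC K A))).flip.compl₁₂ rresLin rresLin)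
    fun u v => by simp [wp_mul_wp, rresLin_wp, rresWordLin_append]
  exact LinearMap.congr_fun₂ this R S

theorem lresLin_mul (R S : NC K A) : lresLin (R * S) = lresLin R * lresLin S := by
  have := lhom_ext_wp₂ (f := (LinearMap.mul K (NC K A)).compr₂ lresLin)
    (g := (LinearMap.mul K (Module.End K (NC K A))).compl₁₂ lresLin lresLin)
    fun u v => by simp [wp_mul_wp, lresLin_wp, lresWordLin_append]
  exact LinearMap.congr_fun₂ this R S

theorem shuffleW_nil_left (v : List A) : shuffleW K A [] v = wp K A v := by
  rw [shuffleW]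

theorem shuffleW_nil_right (u : List A) : shuffleW K A u [] = wp K A u := by
  cases u <;> simp [shuffleW]

theorem shuffleW_cons_cons (a b : A) (u v : List A) :
    shuffleW K A (a :: u) (b :: v) =
      wp K A [a] * shuffleW K A u (b :: v) + wp K A [b] * shuffleW K A (a :: u) v := by
  rw [shuffleW]

theorem shuffleW_concat_concat (u v : List A) (x y : A) :
    shuffleW K A (u ++ [x]) (v ++ [y]) =
      shuffleW K A u (v ++ [y]) * wp K A [x] + shuffleW K A (u ++ [x]) v * wp K A [y] := by
  induction u generalizing v with
  | nil =>
    induction v with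
    | nil =>
      rw [List.nil_append, List.nil_append, shuffleW_cons_cons, shuffleW_nil_left,
        shuffleW_nil_right, add_comm]
    | cons b v ih =>
      simp only [List.nil_append, List.cons_append] at ih ⊢
      rw [shuffleW_cons_cons, ih, shuffleW_cons_cons]
      simp only [shuffleW_nil_left, mul_add, add_mul, mul_assoc, wp_mul_wp, List.cons_append,
        List.nil_append]
      abel
  | cons a u ihu =>
    induction v with
    | nil =>
      have ih := ihu []
      simp only [List.nil_append, List.cons_append] at ih ⊢
      rw [shuffleW_cons_cons, ih, shuffleW_cons_cons]
      simp only [shuffleW_nil_right, mul_add, add_mul, mul_assoc, wp_mul_wp, List.cons_append,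
        List.nil_append, List.append_assoc]
      abel
    | cons b v ihv =>
      have ih := ihu (b :: v)
      simp only [List.cons_append] at ih ihv ⊢
      rw [shuffleW_cons_cons, ih, ihv, shuffleW_cons_cons a b u,
        shuffleW_cons_cons a b (u ++ [x])]
      simp only [mul_add, add_mul, mul_assoc]
      abel

theorem shuffleLin_wp_wp (u v : List A) :
    shuffleLin (wp K A u) (wp K A v) = shuffleW K A u v := by
  simp only [shuffleLin, wp_eq_wordBasis, Module.Basis.constr_basis, FreeMonoid.toList_ofList]

theorem shuffleLin_nil_left (X : NC K A) : shuffleLin (wp K A []) X = X := by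
  have : shuffleLin (wp K A []) = LinearMap.id :=
    lhom_ext_wp fun v => by rw [shuffleLin_wp_wp, shuffleW_nil_left, LinearMap.id_apply]
  rw [this, LinearMap.id_apply]

theorem shuffleLin_nil_right (X : NC K A) : shuffleLin X (wp K A []) = X := by
  have : shuffleLin.flip (wp K A []) = LinearMap.id :=
    lhom_ext_wp fun u => by
      rw [LinearMap.flip_apply, shuffleLin_wp_wp, shuffleW_nil_right, LinearMap.id_apply]
  rw [← LinearMap.flip_apply (m := X), this, LinearMap.id_apply]

theorem rresWordLin_letter_wp_mul (a x : A) (X : NC K A) :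
    rresWordLin [a] (wp K A [x] * X) = if a = x then X else 0 := by
  have : rresWordLin [a] ∘ₗ LinearMap.mulLeft K (wp K A [x]) =
      if a = x then LinearMap.id else 0 :=
    lhom_ext_wp fun w => by
      split_ifs with h <;> simp [wp_mul_wp, rresWordLin_wp, h]
  rw [← LinearMap.mulLeft_apply K, ← LinearMap.comp_apply, this]
  split_ifs <;> rfl

theorem lresWordLin_letter_mul_wp (a x : A) (X : NC K A) :
    lresWordLin [a] (X * wp K A [x]) = if a = x then X else 0 := by
  have : lresWordLin [a] ∘ₗ LinearMap.mulRight K (wp K A [x]) =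
      if a = x then LinearMap.id else 0 :=
    lhom_ext_wp fun w => by
      split_ifs with h <;> simp [wp_mul_wp, lresWordLin_wp, h]
  rw [← LinearMap.mulRight_apply K, ← LinearMap.comp_apply, this]
  split_ifs <;> rfl

theorem rresWordLin_letter_mem (a : A) :
    rresWordLin (K := K) [a] ∈ derivationLieSubalgebra shuffleLin := by
  refine mem_derivationLieSubalgebra_of_wp fun u v => ?_
  rw [shuffleLin_wp_wp]
  match u, v with
  | [], v => simp [shuffleW_nil_left, rresWordLin_wp, shuffleLin_nil_left]
  | x :: u, [] => simp [shuffleW_nil_right, rresWordLin_wp, shuffleLin_nil_right]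
  | x :: u, y :: v =>
    rw [shuffleW_cons_cons, map_add, rresWordLin_letter_wp_mul, rresWordLin_letter_wp_mul,
      wp_cons x u, wp_cons y v, rresWordLin_letter_wp_mul, rresWordLin_letter_wp_mul]
    split_ifs <;> simp [shuffleLin_wp_wp, wp_mul_wp]

theorem lresWordLin_letter_mem (a : A) :
    lresWordLin (K := K) [a] ∈ derivationLieSubalgebra shuffleLin := by
  refine mem_derivationLieSubalgebra_of_wp fun u v => ?_
  rw [shuffleLin_wp_wp]
  rcases u.eq_nil_or_concat' with rfl | ⟨u, x, rfl⟩
  · simp [shuffleW_nil_left, lresWordLin_wp, shuffleLin_nil_left]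
  rcases v.eq_nil_or_concat' with rfl | ⟨v, y, rfl⟩
  · simp [shuffleW_nil_right, lresWordLin_wp, shuffleLin_nil_right]
  rw [shuffleW_concat_concat, map_add, lresWordLin_letter_mul_wp, lresWordLin_letter_mul_wp,
    ← wp_mul_wp u, ← wp_mul_wp v, lresWordLin_letter_mul_wp, lresWordLin_letter_mul_wp]
  split_ifs <;> simp [shuffleLin_wp_wp, wp_mul_wp]

theorem rresLin_mem_of_mem_freeLie {R : NC K A} (hR : R ∈ freeLie K A) :
    rresLin R ∈ derivationLieSubalgebra shuffleLin := by
  induction hR using LieSubalgebra.lieSpan_induction with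
  | mem _ h =>
    obtain ⟨a, rfl⟩ := h
    rw [rresLin_wp]
    exact rresWordLin_letter_mem a
  | zero => simpa only [map_zero] using zero_mem _
  | add _ _ _ _ hx hy => simpa only [map_add] using add_mem hx hy
  | smul c _ _ hx => simpa only [map_smul] using LieSubalgebra.smul_mem _ c hx
  | lie x y _ _ hx hy =>
    have : rresLin ⁅x, y⁆ = ⁅rresLin y, rresLin x⁆ := by
      simp only [Ring.lie_def, map_sub, rresLin_mul]
    simpa only [this] using LieSubalgebra.lie_mem _ hy hx

theorem lresLin_mem_of_mem_freeLie {R : NC K A} (hR : R ∈ freeLie K A) :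
    lresLin R ∈ derivationLieSubalgebra shuffleLin := by
  induction hR using LieSubalgebra.lieSpan_induction with
  | mem _ h =>
    obtain ⟨a, rfl⟩ := h
    rw [lresLin_wp]
    exact lresWordLin_letter_mem a
  | zero => simpa only [map_zero] using zero_mem _
  | add _ _ _ _ hx hy => simpa only [map_add] using add_mem hx hy
  | smul c _ _ hx => simpa only [map_smul] using LieSubalgebra.smul_mem _ c hx
  | lie x y _ _ hx hy =>
    have : lresLin ⁅x, y⁆ = ⁅lresLin x, lresLin y⁆ := by
      simp only [Ring.lie_def, map_sub, lresLin_mul]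
    simpa only [this] using LieSubalgebra.lie_mem _ hx hy

end

theorem residual_by_lie_polynomial_is_shuffle_derivation_general
    (K A : Type*) [CommRing K]
    (P Q R : NC K A) (hR : R ∈ freeLie K A) :
    rres K A (sh K A P Q) R = sh K A (rres K A P R) Q + sh K A P (rres K A Q R) ∧
    lres K A R (sh K A P Q) = sh K A (lres K A R P) Q + sh K A P (lres K A R Q) := by
  simp only [sh_eq_shuffleLin, rres_eq_rresLin, lres_eq_lresLin]
  exact ⟨mem_derivationLieSubalgebra.1 (rresLin_mem_of_mem_freeLie hR) P Q,
    mem_derivationLieSubalgebra.1 (lresLin_mem_of_mem_freeLie hR) P Q⟩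

theorem residual_by_lie_polynomial_is_shuffle_derivation
    (K A : Type*) [CommRing K] [Fintype A]
    (P Q R : NC K A) (hR : R ∈ freeLie K A) :
    rres K A (sh K A P Q) R = sh K A (rres K A P R) Q + sh K A P (rres K A Q R) ∧
    lres K A R (sh K A P Q) = sh K A (lres K A R P) Q + sh K A P (lres K A R Q) :=
  residual_by_lie_polynomial_is_shuffle_derivation_general K A P Q R hR
end

section
/- Let A be a finite alphabet and let w ∈ A^+ be a nonempty word, and work over K = ℤ. If λ(w) = 0 then γ(w) = 0; otherwise γ(w) equals the greatest common divisor of the (nonzero) coefficients appearing in the monomials of λ(w). -/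
open scoped BigOperators
open Classical

noncomputable section

variable (K A : Type*) [CommRing K]

attribute [local instance] LieRing.ofAssociativeRing

end

/-!
As a ℤ-module, `L_ℤ(A)` is spanned by the left-normed brackets `ℓ(u)` of words: bracketing
with a letter preserves this span, and by the Jacobi identity so does bracketing with any
`ℓ(u)`. Adjointness of `λ` and `ℓ` gives `(ℓ(u), w) = (λ(w), u)`, so the coefficients at `w`
of Lie elements form exactly the ideal of `ℤ` generated by the coefficients of `λ(w)`, whose
nonnegative generator is their gcd.
-/

section LeftNormed

variable {R L ι : Type*} [CommRing R] [LieRing L] [LieAlgebra R L] (x : ι → L)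

open Submodule

def leftNormed : List ι → L
  | [] => 0
  | i :: l => l.foldl (fun y j => ⁅y, x j⁆) (x i)

@[simp]
lemma leftNormed_nil : leftNormed x [] = 0 := rfl

@[simp]
lemma leftNormed_singleton (i : ι) : leftNormed x [i] = x i := rfl

lemma leftNormed_append_singleton {l : List ι} (hl : l ≠ []) (j : ι) :
    leftNormed x (l ++ [j]) = ⁅leftNormed x l, x j⁆ := by
  obtain ⟨i, l, rfl⟩ := List.exists_cons_of_ne_nil hl
  simp [leftNormed, List.foldl_append]

lemma lie_gen_mem_span_leftNormed {y : L} (hy : y ∈ span R (Set.range (leftNormed x)))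
    (j : ι) : ⁅y, x j⁆ ∈ span R (Set.range (leftNormed x)) := by
  induction hy using span_induction with
  | mem y hy =>
    obtain ⟨l, rfl⟩ := hy
    rcases eq_or_ne l [] with rfl | hl
    · simp
    · exact subset_span ⟨l ++ [j], leftNormed_append_singleton x hl j⟩
  | zero => simp
  | add y z _ _ hy hz => simpa only [add_lie] using add_mem hy hz
  | smul r y _ hy => simpa only [smul_lie] using smul_mem _ r hy

lemma lie_leftNormed_mem_span_leftNormed {y : L} (hy : y ∈ span R (Set.range (leftNormed x)))
    (l : List ι) : ⁅y, leftNormed x l⁆ ∈ span R (Set.range (leftNormed x)) := by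
  induction l using List.reverseRecOn generalizing y with
  | nil => simp
  | append_singleton l j ih =>
    rcases eq_or_ne l [] with rfl | hl
    · exact lie_gen_mem_span_leftNormed x hy j
    · -- Jacobi: ⁅y, ⁅ℓ l, x j⁆⁆ = ⁅⁅y, ℓ l⁆, x j⁆ - ⁅⁅y, x j⁆, ℓ l⁆
      rw [leftNormed_append_singleton x hl, leibniz_lie, ← lie_skew (leftNormed x l)]
      exact add_mem (lie_gen_mem_span_leftNormed x (ih hy) j)
        (neg_mem (ih (lie_gen_mem_span_leftNormed x hy j)))

lemma lie_mem_span_leftNormed {y z : L} (hy : y ∈ span R (Set.range (leftNormed x)))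
    (hz : z ∈ span R (Set.range (leftNormed x))) :
    ⁅y, z⁆ ∈ span R (Set.range (leftNormed x)) := by
  induction hz using span_induction with
  | mem z hz => obtain ⟨l, rfl⟩ := hz; exact lie_leftNormed_mem_span_leftNormed x hy l
  | zero => simp
  | add z z' _ _ hz hz' => simpa only [lie_add] using add_mem hz hz'
  | smul r z _ hz => simpa only [lie_smul] using smul_mem _ r hz

theorem LieSubalgebra.lieSpan_range_eq_span_leftNormed :
    (LieSubalgebra.lieSpan R L (Set.range x)).toSubmodule =
      span R (Set.range (leftNormed x)) := by
  refine le_antisymm ?_ ?_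
  · let S : LieSubalgebra R L :=
      { span R (Set.range (leftNormed x)) with
        lie_mem' := lie_mem_span_leftNormed x }
    refine (LieSubalgebra.toSubmodule_le_toSubmodule _ S).mpr
      (LieSubalgebra.lieSpan_le.mpr ?_)
    rintro _ ⟨i, rfl⟩
    exact subset_span ⟨[i], rfl⟩
  · rw [span_le]
    rintro _ ⟨l, rfl⟩
    induction l using List.reverseRecOn with
    | nil => exact zero_mem _
    | append_singleton l j ih =>
      rcases eq_or_ne l [] with rfl | hl
      · exact LieSubalgebra.subset_lieSpan ⟨j, rfl⟩
      · rw [leftNormed_append_singleton x hl]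
        exact LieSubalgebra.lie_mem _ ih (LieSubalgebra.subset_lieSpan ⟨j, rfl⟩)

end LeftNormed

section Coefficients

variable {K A : Type*} [CommRing K]

attribute [local instance] LieRing.ofAssociativeRing

@[simp]
lemma coeffW_zero (w : List A) : coeffW K A 0 w = 0 := rfl

@[simp]
lemma coeffW_sub (P Q : NC K A) (w : List A) :
    coeffW K A (P - Q) w = coeffW K A P w - coeffW K A Q w := rfl

lemma coeffW_wp (u w : List A) : coeffW K A (wp K A u) w = if u = w then 1 else 0 := by
  simp [coeffW, wp, MonoidAlgebra.coeff_single, Finsupp.single_apply]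

lemma coeffW_mul_wp_singleton (P : NC K A) (b : A) (w : List A) :
    coeffW K A (P * wp K A [b]) w =
      if w.getLast? = some b then coeffW K A P w.dropLast else 0 := by
  unfold coeffW wp
  split_ifs with h
  · obtain ⟨v, rfl⟩ := List.getLast?_eq_some_iff.mp h
    rw [List.dropLast_concat, ← mul_one (P.coeff _)]
    refine MonoidAlgebra.coeff_mul_single_eq_coeff_mul _ fun m _ => ?_
    rw [FreeMonoid.ofList_append]
    exact mul_left_inj _
  · refine MonoidAlgebra.coeff_mul_single_of_forall_mul_ne _ _ fun d hd => h ?_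
    exact List.getLast?_eq_some_iff.mpr ⟨d.toList, congrArg FreeMonoid.toList hd.symm⟩

lemma coeffW_wp_singleton_mul (P : NC K A) (b : A) (w : List A) :
    coeffW K A (wp K A [b] * P) w =
      if w.head? = some b then coeffW K A P w.tail else 0 := by
  unfold coeffW wp
  split_ifs with h
  · obtain ⟨v, rfl⟩ := List.head?_eq_some_iff.mp h
    rw [List.tail_cons, ← one_mul (P.coeff _)]
    refine MonoidAlgebra.coeff_single_mul_eq_mul_coeff _ fun m _ => ?_
    rw [← List.singleton_append, FreeMonoid.ofList_append]
    exact mul_right_inj _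
  · refine MonoidAlgebra.coeff_single_mul_of_forall_mul_ne _ _ fun d hd => h ?_
    exact List.head?_eq_some_iff.mpr ⟨d.toList, congrArg FreeMonoid.toList hd.symm⟩

lemma lam_cons_cons (a b : A) (t : List A) :
    lam K A (a :: b :: t) =
      lam K A (a :: (b :: t).dropLast) * wp K A [(b :: t).getLast (List.cons_ne_nil b t)] -
        lam K A (b :: t) * wp K A [a] := by
  rw [lam]

@[simp]
lemma coeffW_lam_nil (w : List A) : coeffW K A (lam K A w) [] = 0 := by
  match w with
  | [] => simp [lam]
  | [a] => simp [lam, coeffW_wp]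
  | a :: b :: t => simp [lam_cons_cons, coeffW_mul_wp_singleton]

theorem coeffW_lam_eq_coeffW_leftNormed (u w : List A) :
    coeffW K A (lam K A w) u = coeffW K A (leftNormed (fun a : A => wp K A [a]) u) w := by
  induction u using List.reverseRecOn generalizing w with
  | nil => simp
  | append_singleton u c ih =>
    rcases eq_or_ne u [] with rfl | hu
    · match w with
      | [] => simp [lam, coeffW_wp]
      | [a] => simp [lam, coeffW_wp, eq_comm]
      | a :: b :: t => simp [lam_cons_cons, coeffW_mul_wp_singleton, coeffW_wp]
    · rw [leftNormed_append_singleton _ hu, Ring.lie_def, coeffW_sub, coeffW_mul_wp_singleton,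
        coeffW_wp_singleton_mul]
      match w with
      | [] => simp [lam]
      | [a] => simp [lam, coeffW_wp, List.singleton_eq_append_iff, hu]
      | a :: b :: t =>
        rw [lam_cons_cons, coeffW_sub, coeffW_mul_wp_singleton, coeffW_mul_wp_singleton]
        simp only [List.getLast?_concat, List.dropLast_concat, List.head?_cons, List.tail_cons,
          List.dropLast_cons_cons, List.getLast?_cons_cons,
          List.getLast?_eq_getLast_of_ne_nil (List.cons_ne_nil b t), Option.some_inj, ih,
          @eq_comm _ c]

end Coefficients

section GcdIdeal

variable {ι R : Type*} [CommRing R] [IsDomain R] [IsBezout R] [NormalizedGCDMonoid R]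

theorem Finset.gcd_mem_span_image (s : Finset ι) (f : ι → R) :
    s.gcd f ∈ Ideal.span (f '' s) := by
  induction s using Finset.induction_on with
  | empty => simp
  | insert i s _ ih =>
    have hpair : ({f i, s.gcd f} : Set R) ⊆ Ideal.span (f '' ↑(insert i s)) :=
      Set.insert_subset (Ideal.subset_span ⟨i, by simp, rfl⟩)
        (Set.singleton_subset_iff.mpr
          (Ideal.span_mono (Set.image_mono (by simp)) ih))
    rw [Finset.gcd_insert]
    exact Ideal.span_le.mpr hpair (span_gcd (f i) (s.gcd f) ▸ Ideal.mem_span_singleton_self _)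

theorem Finsupp.span_range_eq_span_gcd (f : ι →₀ R) :
    Ideal.span (Set.range f) = Ideal.span {f.support.gcd f} := by
  refine le_antisymm (Ideal.span_le.mpr ?_) (Ideal.span_le.mpr ?_)
  · rintro _ ⟨i, rfl⟩
    refine Ideal.mem_span_singleton.mpr ?_
    by_cases hi : i ∈ f.support
    · exact Finset.gcd_dvd hi
    · rw [Finsupp.notMem_support_iff.mp hi]
      exact dvd_zero _
  · exact Set.singleton_subset_iff.mpr
      (Ideal.span_mono (Set.image_subset_range _ _) (f.support.gcd_mem_span_image f))

end GcdIdeal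

theorem Int.natAbs_generator_eq_of_eq_span_singleton {I : Ideal ℤ} [I.IsPrincipal] {g : ℤ}
    (h : I = Ideal.span {g}) : (Submodule.IsPrincipal.generator I).natAbs = g.natAbs := by
  subst h
  exact Int.associated_iff_natAbs.mp (Submodule.IsPrincipal.associated_generator_span_self g)

section Gamma

variable {K A : Type*} [CommRing K]

attribute [local instance] LieRing.ofAssociativeRing

theorem freeLie_toSubmodule_eq_span_leftNormed :
    (freeLie K A).toSubmodule =
      Submodule.span K (Set.range (leftNormed fun a : A => wp K A [a])) :=
  LieSubalgebra.lieSpan_range_eq_span_leftNormed _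

theorem span_coeffW_freeLie_eq_span_coeff_lam (w : List A) :
    Ideal.span {c : K | ∃ P ∈ freeLie K A, coeffW K A P w = c} =
      Ideal.span (Set.range (lam K A w).coeff) := by
  let φ : NC K A →ₗ[K] K :=
    (Finsupp.lapply (FreeMonoid.ofList w)).comp (MonoidAlgebra.coeffLinearEquiv K).toLinearMap
  have himage : {c : K | ∃ P ∈ freeLie K A, coeffW K A P w = c} =
      φ '' (freeLie K A).toSubmodule := by
    ext c; simp [φ, coeffW]
  have hrange :
      φ ∘ leftNormed (fun a : A => wp K A [a]) = (lam K A w).coeff ∘ FreeMonoid.ofList :=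
    funext fun u => (coeffW_lam_eq_coeffW_leftNormed u w).symm
  rw [himage, freeLie_toSubmodule_eq_span_leftNormed, ← Submodule.map_coe, Submodule.map_span,
    ← Set.range_comp, hrange, FreeMonoid.ofList.surjective.range_comp]
  exact Submodule.span_eq _

end Gamma

theorem gammaW_eq_gcd_coeff_lam {A : Type*} (w : List A) :
    gammaW A w = (lam ℤ A w).coeff.support.gcd (lam ℤ A w).coeff := by
  rw [gammaW, Int.natAbs_generator_eq_of_eq_span_singleton
      ((span_coeffW_freeLie_eq_span_coeff_lam w).trans (Finsupp.span_range_eq_span_gcd _)),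
    ← Int.abs_eq_natAbs, Int.abs_eq_normalize, Finset.normalize_gcd]

theorem gamma_eq_gcd_coeffs_lam_general
    (A : Type*) (w : List A) :
    (lam ℤ A w = 0 → gammaW A w = 0) ∧
    (lam ℤ A w ≠ 0 →
      gammaW A w = Finset.gcd (Finsupp.support (lam ℤ A w).coeff) fun v => (lam ℤ A w).coeff v) :=
  ⟨fun h => by rw [gammaW_eq_gcd_coeff_lam, h]; simp, fun _ => gammaW_eq_gcd_coeff_lam w⟩

theorem gamma_eq_gcd_coeffs_lam
    (A : Type*) [Fintype A] (w : List A) (hw : w ≠ []) :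
    (lam ℤ A w = 0 → gammaW A w = 0) ∧
    (lam ℤ A w ≠ 0 →
      gammaW A w = Finset.gcd (Finsupp.support (lam ℤ A w).coeff) fun v => (lam ℤ A w).coeff v) :=
  gamma_eq_gcd_coeffs_lam_general A w
end
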